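/- For all q, n ≥ 1, Σ_{d ∥ q} |c̃_d(n)| = 2^{ω(q/(n,q)_{**})} · (n,q)_{**}. -/

import Mathlib

/-!
The unitary divisors of `q` are the numbers `q_S = ∏_{p ∈ S} p ^ v_p(q)` for the sets `S` of
prime factors of `q`, and `(n, q)_** = q_T`, where `T` is the set of primes `p ∣ q` with
`v_p(n) = v_p(q)`. Expanding a product over `S ∩ T` gives
`c̃_{q_S}(n) = (-1) ^ |S \ T| · ∏_{p ∈ S ∩ T} (p ^ v_p(q) - 1)`, so summing `|c̃_{q_S}(n)|` over
all `S` yields `∏_{p ∈ T} p ^ v_p(q) · 2 ^ |P \ T|`, where `P` is the set of prime factors of `q`.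
-/

def uDivisors (n : ℕ) : Finset ℕ := n.divisors.filter (fun d => Nat.gcd d (n / d) = 1)

def mustar (n : ℕ) : ℤ := (-1) ^ n.primeFactors.card

def gcud (n q : ℕ) : ℕ := (uDivisors n ∩ uDivisors q).sup id

def ctilde (q n : ℕ) : ℤ := ∑ d ∈ uDivisors (gcud n q), (d : ℤ) * mustar (q / d)

open Finset

def ordProjProd (q : ℕ) (S : Finset ℕ) : ℕ := ∏ p ∈ S, ordProj[p] q

section ordProjProd

variable {n q : ℕ} {S T : Finset ℕ}

lemma ordProjProd_pos (q : ℕ) (S : Finset ℕ) : 0 < ordProjProd q S :=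
  prod_pos fun p _ => Nat.ordProj_pos q p

lemma ordProjProd_mul_sdiff (hTS : T ⊆ S) :
    ordProjProd q T * ordProjProd q (S \ T) = ordProjProd q S := by
  rw [ordProjProd, ordProjProd, ordProjProd, mul_comm, prod_sdiff hTS]

lemma ordProjProd_div (hTS : T ⊆ S) :
    ordProjProd q S / ordProjProd q T = ordProjProd q (S \ T) := by
  rw [← ordProjProd_mul_sdiff hTS, Nat.mul_div_cancel_left _ (ordProjProd_pos q T)]

lemma ordProjProd_primeFactors (hq : q ≠ 0) : ordProjProd q q.primeFactors = q :=
  Nat.prod_factorization_pow_eq_self hq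

lemma div_ordProjProd (hq : q ≠ 0) (hS : S ⊆ q.primeFactors) :
    q / ordProjProd q S = ordProjProd q (q.primeFactors \ S) := by
  rw [← ordProjProd_div hS, ordProjProd_primeFactors hq]

lemma ordProjProd_congr (h : ∀ p ∈ S, n.factorization p = q.factorization p) :
    ordProjProd n S = ordProjProd q S :=
  prod_congr rfl fun p hp => by rw [h p hp]

lemma factorization_ordProjProd (hS : S ⊆ q.primeFactors) (p : ℕ) :
    (ordProjProd q S).factorization p = if p ∈ S then q.factorization p else 0 := by
  have hprime {r} (hr : r ∈ S) : r.Prime := Nat.prime_of_mem_primeFactors (hS hr)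
  rw [ordProjProd, Nat.factorization_prod fun r hr => (pow_pos (hprime hr).pos _).ne',
    sum_apply', sum_congr rfl fun r hr => by rw [(hprime hr).factorization_pow]]
  simp [Finsupp.single_apply]

lemma primeFactors_ordProjProd (hS : S ⊆ q.primeFactors) :
    (ordProjProd q S).primeFactors = S := by
  ext p
  rw [← Nat.support_factorization, Finsupp.mem_support_iff, factorization_ordProjProd hS]
  by_cases hp : p ∈ S
  · simpa [hp, ← Finsupp.mem_support_iff] using hS hp
  · simp [hp]

lemma ordProjProd_ordProjProd (hS : S ⊆ q.primeFactors) (hTS : T ⊆ S) :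
    ordProjProd (ordProjProd q S) T = ordProjProd q T :=
  ordProjProd_congr fun p hp => by rw [factorization_ordProjProd hS, if_pos (hTS hp)]

end ordProjProd

section uDivisors

variable {m d q : ℕ} {S : Finset ℕ}

lemma mem_uDivisors : d ∈ uDivisors m ↔ d ∣ m ∧ m ≠ 0 ∧ Nat.Coprime d (m / d) := by
  simp [uDivisors, Nat.Coprime, and_assoc]

lemma factorization_eq_of_mem_uDivisors (hd : d ∈ uDivisors m) {p : ℕ}
    (hp : p ∈ d.primeFactors) : m.factorization p = d.factorization p := by
  obtain ⟨hdm, -, hcop⟩ := mem_uDivisors.1 hd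
  rw [← Nat.mul_div_cancel' hdm]
  exact Nat.factorization_eq_of_coprime_left hcop
    (Nat.mem_primeFactors_iff_mem_primeFactorsList.1 hp)

lemma ordProjProd_primeFactors_of_mem_uDivisors (hd : d ∈ uDivisors m) :
    ordProjProd m d.primeFactors = d := by
  have hd0 : d ≠ 0 := by
    rintro rfl
    obtain ⟨hdm, hm, -⟩ := mem_uDivisors.1 hd
    exact hm (zero_dvd_iff.1 hdm)
  rw [ordProjProd_congr fun p hp => factorization_eq_of_mem_uDivisors hd hp,
    ordProjProd_primeFactors hd0]

lemma ordProjProd_mem_uDivisors (hq : q ≠ 0) (hS : S ⊆ q.primeFactors) :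
    ordProjProd q S ∈ uDivisors q := by
  refine mem_uDivisors.2
    ⟨(prod_dvd_prod_of_subset _ _ _ hS).trans (ordProjProd_primeFactors hq).dvd, hq, ?_⟩
  rw [div_ordProjProd hq hS, ← Nat.disjoint_primeFactors
    (ordProjProd_pos q _).ne' (ordProjProd_pos q _).ne', primeFactors_ordProjProd hS,
    primeFactors_ordProjProd sdiff_subset]
  exact disjoint_sdiff

lemma sum_uDivisors {M : Type*} [AddCommMonoid M] (hq : q ≠ 0) (f : ℕ → M) :
    ∑ d ∈ uDivisors q, f d = ∑ S ∈ q.primeFactors.powerset, f (ordProjProd q S) := by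
  have himage : uDivisors q = q.primeFactors.powerset.image (ordProjProd q) := by
    ext d
    simp only [mem_image, mem_powerset]
    refine ⟨fun hd => ⟨d.primeFactors, ?_, ordProjProd_primeFactors_of_mem_uDivisors hd⟩,
      ?_⟩
    · obtain ⟨hdm, hq, -⟩ := mem_uDivisors.1 hd
      exact Nat.primeFactors_mono hdm hq
    · rintro ⟨S, hS, rfl⟩
      exact ordProjProd_mem_uDivisors hq hS
  rw [himage, sum_image fun S hS T hT h => by
    rw [← primeFactors_ordProjProd (mem_powerset.1 hS), h,
      primeFactors_ordProjProd (mem_powerset.1 hT)]]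

end uDivisors

def gcudPrimes (n q : ℕ) : Finset ℕ :=
  {p ∈ q.primeFactors | n.factorization p = q.factorization p}

section gcud

variable {n q : ℕ} {S : Finset ℕ}

lemma gcudPrimes_subset (n q : ℕ) : gcudPrimes n q ⊆ q.primeFactors := filter_subset _ _

lemma gcud_eq_ordProjProd (hn : n ≠ 0) (hq : q ≠ 0) :
    gcud n q = ordProjProd q (gcudPrimes n q) := by
  set T := gcudPrimes n q
  refine le_antisymm (Finset.sup_le fun d hd => ?_)
    (Finset.le_sup (f := id) (mem_inter.2 ⟨?_, ?_⟩))
  · obtain ⟨hdn, hdq⟩ := mem_inter.1 hd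
    have hdT : d.primeFactors ⊆ T := fun p hp => mem_filter.2
      ⟨Nat.primeFactors_mono (mem_uDivisors.1 hdq).1 hq hp, by
        rw [factorization_eq_of_mem_uDivisors hdn hp, factorization_eq_of_mem_uDivisors hdq hp]⟩
    rw [← ordProjProd_primeFactors_of_mem_uDivisors hdq]
    exact Nat.le_of_dvd (ordProjProd_pos q T) (prod_dvd_prod_of_subset _ _ _ hdT)
  · have hTn : T ⊆ n.primeFactors := fun p hp => by
      obtain ⟨hpq, hnq⟩ := mem_filter.1 hp
      rw [← Nat.support_factorization, Finsupp.mem_support_iff] at hpq ⊢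
      rwa [hnq]
    show ordProjProd q T ∈ uDivisors n
    rw [← ordProjProd_congr (S := T) fun p hp => (mem_filter.1 hp).2]
    exact ordProjProd_mem_uDivisors hn hTn
  · exact ordProjProd_mem_uDivisors hq (gcudPrimes_subset n q)

lemma gcudPrimes_ordProjProd (hS : S ⊆ q.primeFactors) :
    gcudPrimes n (ordProjProd q S) = S ∩ gcudPrimes n q := by
  ext p
  simp only [gcudPrimes, mem_filter, mem_inter, primeFactors_ordProjProd hS,
    factorization_ordProjProd hS]
  by_cases hp : p ∈ S
  · simp [hp, hS hp]
  · simp [hp]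

lemma gcud_ordProjProd (hn : n ≠ 0) (hS : S ⊆ q.primeFactors) :
    gcud n (ordProjProd q S) = ordProjProd q (S ∩ gcudPrimes n q) := by
  rw [gcud_eq_ordProjProd hn (ordProjProd_pos q S).ne', gcudPrimes_ordProjProd hS,
    ordProjProd_ordProjProd hS inter_subset_left]

end gcud

lemma Finset.sum_powerset_prod_mul_neg_one_pow {ι R : Type*} [DecidableEq ι] [CommRing R]
    {s t : Finset ι} (hst : s ⊆ t) (x : ι → R) :
    ∑ u ∈ s.powerset, (∏ i ∈ u, x i) * (-1) ^ #(t \ u) =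
      (-1) ^ #(t \ s) * ∏ i ∈ s, (x i - 1) := by
  have hsplit : ∀ u ∈ s.powerset,
      (-1 : R) ^ #(t \ u) = (-1) ^ #(t \ s) * ∏ _i ∈ s \ u, (-1) := by
    intro u hu
    have hus := mem_powerset.1 hu
    rw [prod_const, ← pow_add, card_sdiff_of_subset (hus.trans hst), card_sdiff_of_subset hst,
      card_sdiff_of_subset hus]
    have := card_le_card hus
    have := card_le_card hst
    congr 1
    omega
  simp_rw [sub_eq_add_neg, prod_add, mul_sum]
  refine sum_congr rfl fun u hu => ?_
  rw [hsplit u hu]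
  ring

lemma Finset.sum_powerset_prod_inter {ι R : Type*} [DecidableEq ι] [CommSemiring R]
    (s t : Finset ι) (x : ι → R) :
    ∑ u ∈ s.powerset, ∏ i ∈ u ∩ t, x i = (∏ i ∈ s ∩ t, (x i + 1)) * 2 ^ #(s \ t) := by
  have hite (u : Finset ι) : ∏ i ∈ u ∩ t, x i = ∏ i ∈ u, if i ∈ t then x i else 1 := by
    rw [← prod_filter, filter_mem_eq_inter]
  simp_rw [hite, ← prod_add_one, ite_add]
  rw [prod_ite, filter_mem_eq_inter, filter_notMem_eq_sdiff, prod_const, one_add_one_eq_two]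

lemma mustar_ordProjProd {q : ℕ} {S : Finset ℕ} (hS : S ⊆ q.primeFactors) :
    mustar (ordProjProd q S) = (-1) ^ #S := by
  rw [mustar, primeFactors_ordProjProd hS]

lemma ctilde_ordProjProd {n q : ℕ} (hn : n ≠ 0) {S : Finset ℕ} (hS : S ⊆ q.primeFactors) :
    ctilde (ordProjProd q S) n =
      (-1) ^ #(S \ gcudPrimes n q) *
        ∏ p ∈ S ∩ gcudPrimes n q, ((p : ℤ) ^ q.factorization p - 1) := by
  set T := gcudPrimes n q
  have hST : S ∩ T ⊆ q.primeFactors := inter_subset_left.trans hS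
  rw [ctilde, gcud_ordProjProd hn hS, sum_uDivisors (ordProjProd_pos q _).ne',
    primeFactors_ordProjProd hST, ← sdiff_inter_self_left,
    ← sum_powerset_prod_mul_neg_one_pow inter_subset_left]
  refine sum_congr rfl fun U hU => ?_
  have hUS : U ⊆ S := (mem_powerset.1 hU).trans inter_subset_left
  rw [ordProjProd_ordProjProd hST (mem_powerset.1 hU), ordProjProd_div hUS,
    mustar_ordProjProd (sdiff_subset.trans hS), ordProjProd]
  push_cast
  rfl

lemma abs_ctilde_ordProjProd {n q : ℕ} (hn : n ≠ 0) {S : Finset ℕ} (hS : S ⊆ q.primeFactors) :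
    |ctilde (ordProjProd q S) n| =
      ∏ p ∈ S ∩ gcudPrimes n q, ((p : ℤ) ^ q.factorization p - 1) := by
  have hnonneg : ∀ p ∈ S ∩ gcudPrimes n q, (0 : ℤ) ≤ (p : ℤ) ^ q.factorization p - 1 :=
    fun p hp => sub_nonneg.2 <| one_le_pow₀ <| by
      exact_mod_cast (Nat.prime_of_mem_primeFactors (hS (mem_inter.1 hp).1)).one_le
  rw [ctilde_ordProjProd hn hS, abs_mul, abs_pow, abs_neg, abs_one, one_pow, one_mul,
    abs_of_nonneg (prod_nonneg hnonneg)]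

theorem sum_abs_ctilde (q n : ℕ) (hq : 0 < q) (hn : 0 < n) :
    ∑ d ∈ uDivisors q, |ctilde d n| =
      2 ^ (q / gcud n q).primeFactors.card * (gcud n q : ℤ) := by
  have hT := gcudPrimes_subset n q
  rw [gcud_eq_ordProjProd hn.ne' hq.ne', div_ordProjProd hq.ne' hT,
    primeFactors_ordProjProd sdiff_subset, sum_uDivisors hq.ne',
    sum_congr rfl fun S hS => abs_ctilde_ordProjProd hn.ne' (mem_powerset.1 hS),
    sum_powerset_prod_inter, inter_eq_right.2 hT, mul_comm]
  push_cast [ordProjProd]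
  simp only [sub_add_cancel]
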